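/- arXiv:2104.08324 — 4 statements merged into one kernel-verified Lean document; each statement's English description precedes it below -/
import Mathlib

section
/- Let V be a p×p symmetric positive definite matrix and let Ṽ = diag(V) be the diagonal matrix with the same diagonal entries. Then tr(Ṽ V⁻¹) ≥ p. -/
/-! Cauchy–Schwarz for the form `⟨x, y⟩ = x ⬝ᵥ V *ᵥ y`, applied to `eᵢ` and `V⁻¹ eᵢ` (whose pairing
is `1`), gives `1 ≤ Vᵢᵢ (V⁻¹)ᵢᵢ` for every `i`; summing over `i` gives the trace bound. -/

open Matrix

namespace Matrix

variable {n R : Type*} [Fintype n] [DecidableEq n]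

theorem trace_diagonal_mul [NonUnitalNonAssocSemiring R] (d : n → R) (A : Matrix n n R) :
    (diagonal d * A).trace = ∑ i, d i * A i i := by
  simp only [trace, diag_apply, diagonal_mul]

section CauchySchwarz

variable [CommRing R] [LinearOrder R] [IsStrictOrderedRing R] [StarRing R] [TrivialStar R]

theorem PosSemidef.sq_dotProduct_mulVec_le {V : Matrix n n R} (hV : V.PosSemidef) (x y : n → R) :
    (x ⬝ᵥ V *ᵥ y) ^ 2 ≤ (x ⬝ᵥ V *ᵥ x) * (y ⬝ᵥ V *ᵥ y) := by
  have hsymm : y ⬝ᵥ V *ᵥ x = x ⬝ᵥ V *ᵥ y := by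
    rw [dotProduct_comm, dotProduct_mulVec, ← mulVec_transpose,
      ← conjTranspose_eq_transpose_of_trivial, hV.isHermitian.eq]
  simpa only [sq, toBilin'_apply', hsymm] using
    (toBilin' V).apply_mul_apply_le_of_forall_zero_le
      (fun z ↦ by simpa [toBilin'_apply'] using hV.dotProduct_mulVec_nonneg z) x y

end CauchySchwarz

variable [Field R] [LinearOrder R] [IsStrictOrderedRing R] [StarRing R] [TrivialStar R]

theorem PosDef.sq_dotProduct_self_le {V : Matrix n n R} (hV : V.PosDef) (x : n → R) :
    (x ⬝ᵥ x) ^ 2 ≤ (x ⬝ᵥ V *ᵥ x) * (V⁻¹ *ᵥ x ⬝ᵥ x) := by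
  have hVV : V *ᵥ V⁻¹ *ᵥ x = x := by
    rw [mulVec_mulVec, mul_nonsing_inv _ ((isUnit_iff_isUnit_det V).mp hV.isUnit), one_mulVec]
  simpa only [hVV, dotProduct_comm (V⁻¹ *ᵥ x)] using
    hV.posSemidef.sq_dotProduct_mulVec_le x (V⁻¹ *ᵥ x)

theorem PosDef.one_le_diag_mul_inv_diag {V : Matrix n n R} (hV : V.PosDef) (i : n) :
    1 ≤ V i i * V⁻¹ i i := by
  simpa [mulVec_single_one] using hV.sq_dotProduct_self_le (Pi.single i 1)

end Matrix

/-- For a symmetric positive definite `V`, `tr(diag(V) · V⁻¹) ≥ p`. -/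
theorem trace_diag_mul_inv_ge {p : ℕ} (V : Matrix (Fin p) (Fin p) ℝ) (hV : V.PosDef) :
    (p : ℝ) ≤ ((Matrix.diagonal fun i => V i i) * V⁻¹).trace := by
  rw [trace_diagonal_mul]
  calc (p : ℝ) = ∑ _i : Fin p, 1 := by simp
    _ ≤ ∑ i, V i i * V⁻¹ i i := Finset.sum_le_sum fun i _ ↦ hV.one_le_diag_mul_inv_diag i
end

section
/- Let V be p×p symmetric positive definite, Ṽ = diag(V), θ₀ ≠ θ* ∈ ℝ^p, and ε > 0. Then α̃* := p / (tr(Ṽ V⁻¹) + ε(θ₀−θ*)ᵀṼ(θ₀−θ*)) satisfies 0 < α̃* < 1. -/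
open Matrix

namespace Matrix

variable {n : Type*} [Fintype n]

theorem PosSemidef.dotProduct_mulVec_sq_le {A : Matrix n n ℝ} (hA : A.PosSemidef)
    (x y : n → ℝ) : (x ⬝ᵥ A *ᵥ y) ^ 2 ≤ (x ⬝ᵥ A *ᵥ x) * (y ⬝ᵥ A *ᵥ y) := by
  let := A.toSeminormedAddCommGroup hA
  let := A.toInnerProductSpace hA
  have hinner (u v : n → ℝ) : inner ℝ u v = u ⬝ᵥ A *ᵥ v := dotProduct_comm _ _
  simpa only [hinner, sq] using real_inner_mul_inner_self_le x y

variable [DecidableEq n]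

/-- Cauchy–Schwarz for the `A`-inner product, applied to `eᵢ` and `A⁻¹ eᵢ`. -/
theorem PosDef.one_le_diag_mul_inv_diag_s6 {A : Matrix n n ℝ} (hA : A.PosDef) (i : n) :
    1 ≤ A i i * A⁻¹ i i := by
  have hAA : A * A⁻¹ = 1 := A.mul_nonsing_inv (isUnit_iff_ne_zero.mpr hA.det_pos.ne')
  set e : n → ℝ := Pi.single i 1
  have h := hA.posSemidef.dotProduct_mulVec_sq_le e (A⁻¹ *ᵥ e)
  rw [mulVec_mulVec, hAA, one_mulVec, dotProduct_comm (A⁻¹ *ᵥ e)] at h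
  simpa [e, mulVec_single] using h

theorem PosDef.card_le_trace_diagonal_diag_mul_inv {A : Matrix n n ℝ} (hA : A.PosDef) :
    (Fintype.card n : ℝ) ≤ (diagonal (fun i => A i i) * A⁻¹).trace := by
  calc (Fintype.card n : ℝ) = ∑ _i : n, 1 := by simp
    _ ≤ ∑ i, A i i * A⁻¹ i i := Finset.sum_le_sum fun i _ => hA.one_le_diag_mul_inv_diag_s6 i
    _ = (diagonal (fun i => A i i) * A⁻¹).trace := by simp [trace, diagonal_mul]

end Matrix

/-- The limiting optimal tempering parameter for variational approximations,
`α̃* = p / (tr(Ṽ V⁻¹) + ε (θ₀−θ*)ᵀ Ṽ (θ₀−θ*))` with `Ṽ = diag(V)`,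
lies strictly between 0 and 1. -/
theorem alpha_tilde_star_in_unit_interval {p : ℕ} (V : Matrix (Fin p) (Fin p) ℝ)
    (hV : V.PosDef) (θ₀ θs : Fin p → ℝ) (hne : θ₀ ≠ θs) (ε : ℝ) (hε : 0 < ε) :
    0 < (p : ℝ) / (((Matrix.diagonal fun i => V i i) * V⁻¹).trace +
          ε * ((θ₀ - θs) ⬝ᵥ ((Matrix.diagonal fun i => V i i) *ᵥ (θ₀ - θs)))) ∧
      (p : ℝ) / (((Matrix.diagonal fun i => V i i) * V⁻¹).trace +
          ε * ((θ₀ - θs) ⬝ᵥ ((Matrix.diagonal fun i => V i i) *ᵥ (θ₀ - θs)))) < 1 := by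
  have hp : (0 : ℝ) < p := by
    rcases p with _ | p
    · exact absurd (Subsingleton.elim θ₀ θs) hne
    · positivity
  have hq : 0 < (θ₀ - θs) ⬝ᵥ ((diagonal fun i => V i i) *ᵥ (θ₀ - θs)) := by
    simpa using (posDef_diagonal_iff.mpr fun i => hV.diag_pos).dotProduct_mulVec_pos
      (sub_ne_zero.mpr hne)
  have hT := hV.card_le_trace_diagonal_diag_mul_inv
  rw [Fintype.card_fin] at hT
  have hden : (p : ℝ) < (diagonal (fun i => V i i) * V⁻¹).trace +
      ε * ((θ₀ - θs) ⬝ᵥ ((diagonal fun i => V i i) *ᵥ (θ₀ - θs))) := by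
    linarith [mul_pos hε hq]
  exact ⟨div_pos hp (hp.trans hden), (div_lt_one (hp.trans hden)).mpr hden⟩
end

section
/- Let ψ and φ be probability densities on ℝ^p that are positive on a compact set K. Then the total variation distance satisfies d_TV(ψ, φ) ≤ sup_{g,h ∈ K} {1 − (φ(h)/ψ(h))(ψ(g)/φ(g))}⁺ + ∫_{ℝ^p \ K} ψ(h) dh + ∫_{ℝ^p \ K} φ(h) dh. -/
/-!
Since `∫ ψ = ∫ φ`, the identity `|x| = 2 x⁺ - x` turns `d_TV(ψ, φ)` into `∫ (ψ - φ)⁺`, which we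
split over `K` and `Kᶜ`. On `Kᶜ` simply `(ψ - φ)⁺ ≤ ψ`. On `K`, writing `S` for the supremum,
every `g ∈ K` gives `ψ h φ g - φ h ψ g ≤ S ψ h φ g`; integrating in `g` over `K` and using
`∫_K φ = 1 - ∫_{Kᶜ} φ`, `∫_K ψ ≤ 1` yields `(ψ h - φ h)⁺ ≤ (S + ∫_{Kᶜ} φ) ψ h`, and integrating
once more in `h` over `K` gives `∫_K (ψ - φ)⁺ ≤ S + ∫_{Kᶜ} φ`.
-/

open MeasureTheory

lemma le_biSup_biSup_of_le {ι κ : Type*} {F : ι → κ → ℝ} {s : Set ι} {t : Set κ} {B : ℝ}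
    (hFB : ∀ i j, F i j ≤ B) {i : ι} {j : κ} (hi : i ∈ s) (hj : j ∈ t) :
    F i j ≤ ⨆ i ∈ s, ⨆ j ∈ t, F i j := by
  have hB : ∀ i, ⨆ j ∈ t, F i j ≤ max B 0 := fun i =>
    Real.iSup_le (fun j => Real.iSup_le (fun _ => (hFB i j).trans (le_max_left _ _))
      (le_max_right _ _)) (le_max_right _ _)
  calc F i j ≤ ⨆ j ∈ t, F i j :=
        le_ciSup₂ (f := fun j (_ : j ∈ t) => F i j)
          ⟨B, by
            simp only [mem_upperBounds, Set.mem_iUnion, Set.mem_range]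
            rintro _ ⟨j, _, rfl⟩
            exact hFB i j⟩ j hj
    _ ≤ ⨆ i ∈ s, ⨆ j ∈ t, F i j :=
        le_ciSup₂ (f := fun i (_ : i ∈ s) => ⨆ j ∈ t, F i j)
          ⟨max B 0, by
            simp only [mem_upperBounds, Set.mem_iUnion, Set.mem_range]
            rintro _ ⟨i, _, rfl⟩
            exact hB i⟩ i hi

lemma mul_sub_mul_le_of_one_sub_div_mul_div_le {a b c d s : ℝ} (ha : 0 < a) (hd : 0 < d)
    (h : 1 - b / a * (c / d) ≤ s) : a * d - b * c ≤ s * (a * d) := by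
  have hfactor : a * d - b * c = (1 - b / a * (c / d)) * (a * d) := by
    field_simp
  rw [hfactor]
  exact mul_le_mul_of_nonneg_right h (mul_pos ha hd).le

namespace MeasureTheory

variable {α : Type*} [MeasurableSpace α] {μ : Measure α} {ψ φ : α → ℝ}

lemma Integrable.max_sub_zero (hψi : Integrable ψ μ) (hφi : Integrable φ μ) :
    Integrable (fun x => max (ψ x - φ x) 0) μ :=
  (hψi.sub hφi).pos_part

lemma integral_abs_sub_eq_two_mul_integral_max_sub_zero (hψi : Integrable ψ μ)
    (hφi : Integrable φ μ) (hψφ : ∫ x, ψ x ∂μ = ∫ x, φ x ∂μ) :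
    ∫ x, |ψ x - φ x| ∂μ = 2 * ∫ x, max (ψ x - φ x) 0 ∂μ := by
  have habs : ∀ y : ℝ, |y| = 2 * max y 0 - y := fun y => by
    rcases le_total 0 y with hy | hy
    · rw [abs_of_nonneg hy, max_eq_left hy]; ring
    · rw [abs_of_nonpos hy, max_eq_right hy]; ring
  simp only [habs]
  have hsub : Integrable (fun x => ψ x - φ x) μ := hψi.sub hφi
  rw [integral_sub ((hψi.max_sub_zero hφi).const_mul 2) hsub, integral_sub hψi hφi,
    hψφ, integral_const_mul, sub_self, sub_zero]

lemma setIntegral_max_sub_zero_le_setIntegral (hψi : Integrable ψ μ) (hφi : Integrable φ μ)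
    (hψ0 : ∀ x, 0 ≤ ψ x) (hφ0 : ∀ x, 0 ≤ φ x) (s : Set α) :
    ∫ x in s, max (ψ x - φ x) 0 ∂μ ≤ ∫ x in s, ψ x ∂μ :=
  setIntegral_mono (hψi.max_sub_zero hφi).integrableOn hψi.integrableOn
    fun x => max_le (by linarith [hφ0 x]) (hψ0 x)

section Densities

variable {K : Set α} {S : ℝ}

lemma sub_le_mul_of_forall_mem_mul_sub_mul_le (hK : MeasurableSet K)
    (hψi : Integrable ψ μ) (hφi : Integrable φ μ) (hψ0 : ∀ x, 0 ≤ ψ x) (hφ0 : ∀ x, 0 ≤ φ x)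
    (hψ1 : ∫ x, ψ x ∂μ = 1) (hφ1 : ∫ x, φ x ∂μ = 1) (hS : 0 ≤ S) {h : α}
    (hg : ∀ g ∈ K, ψ h * φ g - φ h * ψ g ≤ S * (ψ h * φ g)) :
    ψ h - φ h ≤ (S + ∫ x in Kᶜ, φ x ∂μ) * ψ h := by
  set cψ := ∫ x in K, ψ x ∂μ
  set dψ := ∫ x in Kᶜ, ψ x ∂μ
  set cφ := ∫ x in K, φ x ∂μ
  set dφ := ∫ x in Kᶜ, φ x ∂μ
  have hψ : cψ + dψ = 1 := (integral_add_compl hK hψi).trans hψ1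
  have hφ : cφ + dφ = 1 := (integral_add_compl hK hφi).trans hφ1
  have hdψ : 0 ≤ dψ := setIntegral_nonneg hK.compl fun x _ => hψ0 x
  have hdφ : 0 ≤ dφ := setIntegral_nonneg hK.compl fun x _ => hφ0 x
  have hcross : ψ h * cφ - φ h * cψ ≤ S * (ψ h * cφ) := by
    have hint : Integrable (fun g => ψ h * φ g - φ h * ψ g) μ :=
      (hφi.const_mul (ψ h)).sub (hψi.const_mul (φ h))
    have hmono := setIntegral_mono_on hint.integrableOn
      ((hφi.const_mul (ψ h)).const_mul S).integrableOn hK hg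
    rwa [integral_sub (hφi.const_mul _).integrableOn (hψi.const_mul _).integrableOn,
      integral_const_mul, integral_const_mul, integral_const_mul, integral_const_mul] at hmono
  calc ψ h - φ h = (ψ h * cφ - φ h * cψ) + ψ h * dφ - φ h * dψ := by
        linear_combination φ h * hψ - ψ h * hφ
    _ ≤ S * (ψ h * cφ) + ψ h * dφ := by linarith [mul_nonneg (hφ0 h) hdψ]
    _ = (S + dφ) * ψ h - S * ψ h * dφ := by linear_combination S * ψ h * hφ
    _ ≤ (S + dφ) * ψ h := sub_le_self _ (mul_nonneg (mul_nonneg hS (hψ0 h)) hdφ)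

lemma setIntegral_max_sub_zero_le (hK : MeasurableSet K)
    (hψi : Integrable ψ μ) (hφi : Integrable φ μ) (hψ0 : ∀ x, 0 ≤ ψ x) (hφ0 : ∀ x, 0 ≤ φ x)
    (hψ1 : ∫ x, ψ x ∂μ = 1) (hφ1 : ∫ x, φ x ∂μ = 1) (hS : 0 ≤ S)
    (hKS : ∀ h ∈ K, ∀ g ∈ K, ψ h * φ g - φ h * ψ g ≤ S * (ψ h * φ g)) :
    ∫ x in K, max (ψ x - φ x) 0 ∂μ ≤ S + ∫ x in Kᶜ, φ x ∂μ := by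
  have hc : 0 ≤ S + ∫ x in Kᶜ, φ x ∂μ :=
    add_nonneg hS (setIntegral_nonneg hK.compl fun x _ => hφ0 x)
  have hψK : ∫ x in K, ψ x ∂μ ≤ 1 :=
    hψ1 ▸ setIntegral_le_integral hψi (Filter.Eventually.of_forall hψ0)
  calc ∫ x in K, max (ψ x - φ x) 0 ∂μ ≤ ∫ x in K, (S + ∫ x in Kᶜ, φ x ∂μ) * ψ x ∂μ :=
        setIntegral_mono_on (hψi.max_sub_zero hφi).integrableOn
          (hψi.const_mul _).integrableOn hK fun h hh => max_le
            (sub_le_mul_of_forall_mem_mul_sub_mul_le hK hψi hφi hψ0 hφ0 hψ1 hφ1 hS (hKS h hh))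
            (mul_nonneg hc (hψ0 h))
    _ = (S + ∫ x in Kᶜ, φ x ∂μ) * ∫ x in K, ψ x ∂μ := integral_const_mul _ _
    _ ≤ S + ∫ x in Kᶜ, φ x ∂μ := mul_le_of_le_one_right hc hψK

end Densities

end MeasureTheory

/-- Lemma 1 of the paper: for probability densities `ψ, φ` positive on a compact set `K`,
the total variation distance is bounded by
`sup_{g,h ∈ K} {1 − (φ(h)/ψ(h))(ψ(g)/φ(g))}⁺ + ∫_{Kᶜ} ψ + ∫_{Kᶜ} φ`. -/
theorem tv_bound_lemma {p : ℕ} (ψ φ : (Fin p → ℝ) → ℝ) (K : Set (Fin p → ℝ))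
    (hK : IsCompact K)
    (hψ0 : ∀ x, 0 ≤ ψ x) (hφ0 : ∀ x, 0 ≤ φ x)
    (hψi : Integrable ψ) (hφi : Integrable φ)
    (hψ1 : ∫ x, ψ x = 1) (hφ1 : ∫ x, φ x = 1)
    (hψK : ∀ x ∈ K, 0 < ψ x) (hφK : ∀ x ∈ K, 0 < φ x) :
    (1 / 2) * ∫ x, |ψ x - φ x| ≤
      (⨆ g ∈ K, ⨆ h ∈ K, max 0 (1 - (φ h / ψ h) * (ψ g / φ g))) +
        (∫ x in Kᶜ, ψ x) + ∫ x in Kᶜ, φ x := by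
  set S := ⨆ g ∈ K, ⨆ h ∈ K, max 0 (1 - (φ h / ψ h) * (ψ g / φ g))
  have hS0 : 0 ≤ S := Real.iSup_nonneg fun _ => Real.iSup_nonneg fun _ =>
    Real.iSup_nonneg fun _ => Real.iSup_nonneg fun _ => le_max_left _ _
  have hle_one : ∀ g h, max 0 (1 - (φ h / ψ h) * (ψ g / φ g)) ≤ 1 := fun g h =>
    max_le zero_le_one (sub_le_self _
      (mul_nonneg (div_nonneg (hφ0 h) (hψ0 h)) (div_nonneg (hψ0 g) (hφ0 g))))
  have hKS : ∀ h ∈ K, ∀ g ∈ K, ψ h * φ g - φ h * ψ g ≤ S * (ψ h * φ g) := fun h hh g hg =>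
    mul_sub_mul_le_of_one_sub_div_mul_div_le (hψK h hh) (hφK g hg)
      ((le_max_right 0 _).trans (le_biSup_biSup_of_le hle_one hg hh))
  have hKm := hK.measurableSet
  have hin := setIntegral_max_sub_zero_le hKm hψi hφi hψ0 hφ0 hψ1 hφ1 hS0 hKS
  have hout := setIntegral_max_sub_zero_le_setIntegral hψi hφi hψ0 hφ0 Kᶜ
  rw [integral_abs_sub_eq_two_mul_integral_max_sub_zero hψi hφi (hψ1.trans hφ1.symm),
    ← integral_add_compl hKm (hψi.max_sub_zero hφi)]
  linarith
end

section
/- Let V be p×p symmetric positive definite, α ∈ (0,1], ε ≥ 0, θ₀, θ* ∈ ℝ^p, and define r_∞(α) = (1/2)(αp + αε(θ₀−θ*)ᵀV(θ₀−θ*) − p log α − p). Then the minimum value of r_∞ over α > 0 equals (p/2) log(1 + (ε/p)(θ₀−θ*)ᵀV(θ₀−θ*)), i.e., 2·min_α r_∞(α) = −p log p + p log(p + ε(θ₀−θ*)ᵀV(θ₀−θ*)). -/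
open Matrix

/-!
Up to constants, `r_∞(α)` is `α b − a log α` with `a = p`, `b = p + c`, and `log x ≤ x − 1` at
`x = α b / a` shows that such a function is minimized at `α = a / b`. At `α* = p/(p + c)` the
linear term collapses to `p`, leaving `2 r_∞(α*) = −p log(p/(p + c))`.
-/

namespace Real

theorem sub_mul_log_div_le {a b α : ℝ} (ha : 0 < a) (hb : 0 < b) (hα : 0 < α) :
    a - a * log (a / b) ≤ α * b - a * log α := by
  have key : log (α * b / a) ≤ α * b / a - 1 := log_le_sub_one_of_pos (by positivity)
  rw [log_div (by positivity) ha.ne', log_mul hα.ne' hb.ne', div_sub_one ha.ne',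
    le_div_iff₀ ha] at key
  rw [log_div ha.ne' hb.ne']
  linarith

end Real

/-- The limiting surrogate expected KL divergence `r_∞(α)`, with `c = ε (θ₀−θ*)ᵀV(θ₀−θ*)`. -/
noncomputable def rInfty (p c α : ℝ) : ℝ :=
  (1 / 2) * (α * p + α * c - p * Real.log α - p)

section rInfty

variable {p c : ℝ}

theorem rInfty_optimal_le (hp : 0 < p) (hc : 0 ≤ c) {α : ℝ} (hα : 0 < α) :
    rInfty p c (p / (p + c)) ≤ rInfty p c α := by
  have hpc : 0 < p + c := by linarith
  have hmin := Real.sub_mul_log_div_le hp hpc hα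
  unfold rInfty
  rw [← mul_add, ← mul_add, div_mul_cancel₀ p hpc.ne']
  linarith

theorem two_mul_rInfty_optimal (hp : 0 < p) (hc : 0 ≤ c) :
    2 * rInfty p c (p / (p + c)) = -p * Real.log p + p * Real.log (p + c) := by
  have hpc : 0 < p + c := by linarith
  unfold rInfty
  rw [← mul_add, div_mul_cancel₀ p hpc.ne', Real.log_div hp.ne' hpc.ne']
  ring

end rInfty

/-- The limiting surrogate expected KL
`r_∞(α) = (1/2)(αp + αεc − p log α − p)` with `c = (θ₀−θ*)ᵀV(θ₀−θ*)` is minimized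
over `α > 0` at `α* = p/(p+εc)`, and `2·min = −p log p + p log(p + εc)`. -/
theorem r_infty_min_value {p : ℕ} (hp : 0 < p) (V : Matrix (Fin p) (Fin p) ℝ)
    (hV : V.PosDef) (θ₀ θs : Fin p → ℝ) (ε : ℝ) (hε : 0 ≤ ε) :
    (∀ α : ℝ, 0 < α →
      (1 / 2) * (((p : ℝ) / (p + ε * ((θ₀ - θs) ⬝ᵥ (V *ᵥ (θ₀ - θs))))) * p +
          ((p : ℝ) / (p + ε * ((θ₀ - θs) ⬝ᵥ (V *ᵥ (θ₀ - θs))))) *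
            (ε * ((θ₀ - θs) ⬝ᵥ (V *ᵥ (θ₀ - θs)))) -
          (p : ℝ) * Real.log ((p : ℝ) / (p + ε * ((θ₀ - θs) ⬝ᵥ (V *ᵥ (θ₀ - θs))))) - p) ≤
        (1 / 2) * (α * p + α * (ε * ((θ₀ - θs) ⬝ᵥ (V *ᵥ (θ₀ - θs)))) -
          (p : ℝ) * Real.log α - p)) ∧
    2 * ((1 / 2) * (((p : ℝ) / (p + ε * ((θ₀ - θs) ⬝ᵥ (V *ᵥ (θ₀ - θs))))) * p +
          ((p : ℝ) / (p + ε * ((θ₀ - θs) ⬝ᵥ (V *ᵥ (θ₀ - θs))))) *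
            (ε * ((θ₀ - θs) ⬝ᵥ (V *ᵥ (θ₀ - θs)))) -
          (p : ℝ) * Real.log ((p : ℝ) / (p + ε * ((θ₀ - θs) ⬝ᵥ (V *ᵥ (θ₀ - θs))))) - p)) =
      -(p : ℝ) * Real.log p +
        (p : ℝ) * Real.log ((p : ℝ) + ε * ((θ₀ - θs) ⬝ᵥ (V *ᵥ (θ₀ - θs)))) := by
  have hq : 0 ≤ (θ₀ - θs) ⬝ᵥ (V *ᵥ (θ₀ - θs)) := hV.posSemidef.dotProduct_mulVec_nonneg _
  have hc := mul_nonneg hε hq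
  have hpR : (0 : ℝ) < p := Nat.cast_pos.mpr hp
  exact ⟨fun α hα => rInfty_optimal_le hpR hc hα, two_mul_rInfty_optimal hpR hc⟩
end
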